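/- arXiv:2206.09285 — 5 statements merged into one kernel-verified Lean document; each statement's English description precedes it below -/
import Mathlib

section
/- Let E be a real inner product space, let f : E → ℝ be differentiable with gradient ∇f, let f be μ-strongly convex on E with μ > 0, and let ∇f be L-Lipschitz with 0 < μ ≤ L. Then for all x, y ∈ E: ⟨∇f(x) − ∇f(y), x − y⟩ ≥ (μL/(μ+L))·‖x − y‖² + (1/(μ+L))·‖∇f(x) − ∇f(y)‖². -/
open RealInnerProductSpace

section Aux

variable {E : Type*} [NormedAddCommGroup E] [InnerProductSpace ℝ E] [CompleteSpace E]

private lemma line_hasDerivAt {h : E → ℝ} {G : E → E}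
    (hG : ∀ z, HasGradientAt h (G z) z) (x d : E) (t : ℝ) :
    HasDerivAt (fun s : ℝ => h (x + s • d)) ⟪G (x + t • d), d⟫ t := by
  have h1 : HasFDerivAt h (InnerProductSpace.toDual ℝ E (G (x + t • d))) (x + t • d) :=
    (hG _).hasFDerivAt
  have h2 : HasDerivAt (fun s : ℝ => x + s • d) d t := by
    simpa using ((hasDerivAt_id t).smul_const d).const_add x
  have h3 := h1.comp_hasDerivAt t h2
  simpa [InnerProductSpace.toDual_apply_apply, Function.comp_def] using h3

private lemma convex_first_order {h : E → ℝ} {G : E → E}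
    (hG : ∀ z, HasGradientAt h (G z) z) (hc : ConvexOn ℝ Set.univ h) (x y : E) :
    h x + ⟪G x, y - x⟫ ≤ h y := by
  set d := y - x with hd
  have hφc : ConvexOn ℝ Set.univ (fun s : ℝ => h (x + s • d)) := by
    have h1 := hc.comp_affineMap (AffineMap.lineMap x y : ℝ →ᵃ[ℝ] E)
    have h2 : ((fun s : ℝ => h (x + s • d)) : ℝ → ℝ)
        = h ∘ (AffineMap.lineMap x y : ℝ →ᵃ[ℝ] E) := by
      funext s
      simp [AffineMap.lineMap_apply, hd, Function.comp]
      rw [add_comm]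
    rw [h2]
    simpa using h1
  have hder := line_hasDerivAt hG x d 0
  have hder0 : HasDerivAt (fun s : ℝ => h (x + s • d)) ⟪G x, d⟫ 0 := by
    simpa using hder
  have hs := hφc.le_slope_of_hasDerivAt (Set.mem_univ (0 : ℝ)) (Set.mem_univ (1 : ℝ))
    one_pos hder0
  have hslope : slope (fun s : ℝ => h (x + s • d)) 0 1 = h y - h x := by
    rw [slope_def_field]
    simp [hd]
  rw [hslope] at hs
  linarith

private lemma convexOn_of_monotone_grad {h : E → ℝ} {G : E → E}
    (hG : ∀ z, HasGradientAt h (G z) z)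
    (hm : ∀ x y, 0 ≤ ⟪G x - G y, x - y⟫) : ConvexOn ℝ Set.univ h := by
  refine ⟨convex_univ, fun x _ y _ a b ha hb hab => ?_⟩
  set d := y - x with hd
  set φ : ℝ → ℝ := fun s => h (x + s • d) with hφ
  have hder : ∀ t, HasDerivAt φ ⟪G (x + t • d), d⟫ t := line_hasDerivAt hG x d
  have hdiff : Differentiable ℝ φ := fun t => (hder t).differentiableAt
  have hmono : Monotone (deriv φ) := by
    intro s t hst
    rw [(hder s).deriv, (hder t).deriv]
    rcases eq_or_lt_of_le hst with rfl | hlt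
    · exact le_refl _
    · have key := hm (x + t • d) (x + s • d)
      have he : (x + t • d) - (x + s • d) = (t - s) • d := by
        rw [sub_smul]; abel
      rw [he, real_inner_smul_right] at key
      have hpos : (0 : ℝ) < t - s := sub_pos.mpr hlt
      have h2 : 0 ≤ ⟪G (x + t • d) - G (x + s • d), d⟫ :=
        nonneg_of_mul_nonneg_right (by linarith [key]) hpos
      rw [inner_sub_left] at h2
      linarith
  have hφc : ConvexOn ℝ Set.univ φ := hmono.convexOn_univ_of_deriv hdiff
  have hkey := hφc.2 (Set.mem_univ (0 : ℝ)) (Set.mem_univ (1 : ℝ)) ha hb hab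
  have ha' : a = 1 - b := by linarith
  have hpt : x + b • d = a • x + b • y := by rw [hd, ha']; module
  have hφ0 : φ (a • (0 : ℝ) + b • (1 : ℝ)) = h (a • x + b • y) := by
    have hb' : a • (0 : ℝ) + b • (1 : ℝ) = b := by simp
    rw [hb', hφ]
    simp only []
    rw [hpt]
  have hφa : φ 0 = h x := by simp [hφ]
  have hφb : φ 1 = h y := by simp [hφ, hd]
  rw [hφ0, hφa, hφb] at hkey
  simpa using hkey

private lemma hasGradientAt_half_sq (c : ℝ) (x : E) :
    HasGradientAt (fun z : E => c / 2 * ‖z‖ ^ 2) (c • x) x := by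
  have h1 := (hasFDerivAt_id x).inner ℝ (hasFDerivAt_id x)
  have h2 := h1.const_mul (c / 2)
  have h2' : HasFDerivAt (fun z : E => c / 2 * ‖z‖ ^ 2)
      ((c / 2) • ((fderivInnerCLM ℝ (x, x)).comp
      ((ContinuousLinearMap.id ℝ E).prod (ContinuousLinearMap.id ℝ E)))) x := by
    simpa [real_inner_self_eq_norm_sq] using h2
  have hclm : (c / 2) • ((fderivInnerCLM ℝ (x, x)).comp
      ((ContinuousLinearMap.id ℝ E).prod (ContinuousLinearMap.id ℝ E)))
      = InnerProductSpace.toDual ℝ E (c • x) := by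
    ext v
    simp [fderivInnerCLM_apply, real_inner_smul_left, real_inner_comm]
    ring
  rw [hclm] at h2'
  simpa using h2'.hasGradientAt

private lemma HasGradientAt.sub' {f₁ f₂ : E → ℝ} {a b x : E}
    (h₁ : HasGradientAt f₁ a x) (h₂ : HasGradientAt f₂ b x) :
    HasGradientAt (fun z => f₁ z - f₂ z) (a - b) x := by
  have h3 := h₁.hasFDerivAt.sub h₂.hasFDerivAt
  rwa [hasGradientAt_iff_hasFDerivAt, map_sub]

/-- Descent lemma from an upper bound on gradient monotonicity. -/
private lemma descent_of_upper {h : E → ℝ} {G : E → E} {K : ℝ}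
    (hG : ∀ z, HasGradientAt h (G z) z)
    (hub : ∀ a b, ⟪G a - G b, a - b⟫ ≤ K * ‖a - b‖ ^ 2) :
    ∀ x y, h y ≤ h x + ⟪G x, y - x⟫ + K / 2 * ‖y - x‖ ^ 2 := by
  intro x y
  have hQ : ∀ z, HasGradientAt (fun z : E => K / 2 * ‖z‖ ^ 2 - h z) (K • z - G z) z :=
    fun z => (hasGradientAt_half_sq K z).sub' (hG z)
  have hmono : ∀ a b, 0 ≤ ⟪(K • a - G a) - (K • b - G b), a - b⟫ := by
    intro a b
    have h1 := hub a b
    have e : (K • a - G a) - (K • b - G b) = K • (a - b) - (G a - G b) := by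
      rw [smul_sub]; abel
    rw [e, inner_sub_left, real_inner_smul_left, real_inner_self_eq_norm_sq]
    linarith
  have hqc := convexOn_of_monotone_grad hQ hmono
  have hfo := convex_first_order hQ hqc x y
  simp only [inner_sub_left, real_inner_smul_left] at hfo
  have e1 : ⟪x, y - x⟫ = ⟪x, y⟫ - ‖x‖ ^ 2 := by
    rw [inner_sub_right, real_inner_self_eq_norm_sq]
  have e2 : ‖y - x‖ ^ 2 = ‖y‖ ^ 2 - 2 * ⟪y, x⟫ + ‖x‖ ^ 2 := norm_sub_sq_real y x
  have e3 : ⟪y, x⟫ = ⟪x, y⟫ := real_inner_comm x y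
  rw [e1] at hfo
  rw [e2, e3]
  ring_nf at hfo ⊢
  linarith [hfo]

/-- Cocoercivity from convexity and descent lemma. -/
private lemma cocoercive {h : E → ℝ} {G : E → E} {K : ℝ} (hK : 0 < K)
    (hG : ∀ z, HasGradientAt h (G z) z)
    (hc : ConvexOn ℝ Set.univ h)
    (hdesc : ∀ x y, h y ≤ h x + ⟪G x, y - x⟫ + K / 2 * ‖y - x‖ ^ 2) (x y : E) :
    h x + ⟪G x, y - x⟫ + 1 / (2 * K) * ‖G y - G x‖ ^ 2 ≤ h y := by
  set z := y - (1 / K) • (G y - G x) with hz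
  have hA := convex_first_order hG hc x z
  have hB := hdesc y z
  have ezx : z - x = (y - x) - (1 / K) • (G y - G x) := by rw [hz]; abel
  have ezy : z - y = -((1 / K) • (G y - G x)) := by rw [hz]; abel
  rw [ezx, inner_sub_right, real_inner_smul_right] at hA
  rw [ezy, inner_neg_right, real_inner_smul_right, norm_neg, norm_smul] at hB
  have hnz : ‖(1 : ℝ) / K‖ = 1 / K := by
    rw [Real.norm_eq_abs, abs_of_pos (by positivity)]
  rw [hnz] at hB
  have eGy : ⟪G y, G y - G x⟫ - ⟪G x, G y - G x⟫ = ‖G y - G x‖ ^ 2 := by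
    rw [← inner_sub_left, real_inner_self_eq_norm_sq]
  have hK' : K ≠ 0 := ne_of_gt hK
  have hsq : K / 2 * ((1 / K) * ‖G y - G x‖) ^ 2 = 1 / (2 * K) * ‖G y - G x‖ ^ 2 := by
    field_simp
  rw [hsq] at hB
  have hfact : 1 / K * ⟪G x, G y - G x⟫ - 1 / K * ⟪G y, G y - G x⟫
      = -(1 / K * ‖G y - G x‖ ^ 2) := by rw [← eGy]; ring
  have hhalf : 1 / K * ‖G y - G x‖ ^ 2 = 2 * (1 / (2 * K) * ‖G y - G x‖ ^ 2) := by
    field_simp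
  linarith [hA, hB, hfact, hhalf]

end Aux

/-- Coercivity inequality (Nesterov, Theorem 2.1.12): if `f` is `μ`-strongly convex with
`L`-Lipschitz gradient `g`, `0 < μ ≤ L`, then
`⟪g x - g y, x - y⟫ ≥ μL/(μ+L) ‖x - y‖² + 1/(μ+L) ‖g x - g y‖²`. -/
theorem coercivity_strongly_convex_lipschitz_grad
    {E : Type*} [NormedAddCommGroup E] [InnerProductSpace ℝ E] [CompleteSpace E]
    (f : E → ℝ) (g : E → E) (μ L : ℝ)
    (hμ : 0 < μ) (hμL : μ ≤ L)
    (hgrad : ∀ x, HasGradientAt f (g x) x)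
    (hsc : ConvexOn ℝ Set.univ (fun x => f x - μ / 2 * ‖x‖ ^ 2))
    (hlip : ∀ x y, ‖g x - g y‖ ≤ L * ‖x - y‖) :
    ∀ x y : E,
      ⟪g x - g y, x - y⟫ ≥
        μ * L / (μ + L) * ‖x - y‖ ^ 2 + 1 / (μ + L) * ‖g x - g y‖ ^ 2 := by
  intro x y
  have hpos : (0 : ℝ) < μ + L := by linarith
  -- gradient of the convex part h = f - μ/2 ‖·‖²
  have hGgrad : ∀ z : E, HasGradientAt (fun w : E => f w - μ / 2 * ‖w‖ ^ 2)
      (g z - μ • z) z := fun z => (hgrad z).sub' (hasGradientAt_half_sq μ z)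
  -- monotonicity of gradient of the convex part
  have hmono : ∀ a b : E, 0 ≤ ⟪(g a - μ • a) - (g b - μ • b), a - b⟫ := by
    intro a b
    have h1 := convex_first_order hGgrad hsc a b
    have h2 := convex_first_order hGgrad hsc b a
    have e1 : ⟪g a - μ • a, b - a⟫ = -⟪g a - μ • a, a - b⟫ := by
      rw [← inner_neg_right, neg_sub]
    rw [e1] at h1
    have e3 : ⟪(g a - μ • a) - (g b - μ • b), a - b⟫
        = ⟪g a - μ • a, a - b⟫ - ⟪g b - μ • b, a - b⟫ := inner_sub_left _ _ _
    rw [e3]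
    linarith [h1, h2]
  -- key inequality: μL‖d‖² + ‖u‖² ≤ (μ+L) ⟪u, d⟫
  have key : μ * L * ‖x - y‖ ^ 2 + ‖g x - g y‖ ^ 2 ≤ (μ + L) * ⟪g x - g y, x - y⟫ := by
    rcases eq_or_lt_of_le hμL with rfl | hlt
    · -- case μ = L
      have hm := hmono x y
      have e : (g x - μ • x) - (g y - μ • y) = (g x - g y) - μ • (x - y) := by
        rw [smul_sub]; abel
      rw [e, inner_sub_left, real_inner_smul_left, real_inner_self_eq_norm_sq] at hm
      have hl := hlip x y
      have hl2 : ‖g x - g y‖ ^ 2 ≤ μ ^ 2 * ‖x - y‖ ^ 2 := by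
        nlinarith [norm_nonneg (g x - g y), norm_nonneg (x - y)]
      have hm' : μ * ‖x - y‖ ^ 2 ≤ ⟪g x - g y, x - y⟫ := by linarith [hm]
      nlinarith [hm', hl2]
    · -- case μ < L
      set K := L - μ with hK
      have hKpos : (0 : ℝ) < K := by simp [hK]; linarith
      -- upper bound on monotonicity of G = g - μ•id
      have hub : ∀ a b : E, ⟪(g a - μ • a) - (g b - μ • b), a - b⟫ ≤ K * ‖a - b‖ ^ 2 := by
        intro a b
        have e : (g a - μ • a) - (g b - μ • b) = (g a - g b) - μ • (a - b) := by
          rw [smul_sub]; abel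
        rw [e, inner_sub_left, real_inner_smul_left, real_inner_self_eq_norm_sq]
        have hcs : ⟪g a - g b, a - b⟫ ≤ ‖g a - g b‖ * ‖a - b‖ :=
          real_inner_le_norm _ _
        have hl := hlip a b
        have : ⟪g a - g b, a - b⟫ ≤ L * ‖a - b‖ ^ 2 := by
          nlinarith [norm_nonneg (a - b)]
        rw [hK]; linarith
      have hconv : ConvexOn ℝ Set.univ (fun w : E => f w - μ / 2 * ‖w‖ ^ 2) := hsc
      have hdesc := descent_of_upper hGgrad hub
      have hco1 := cocoercive hKpos hGgrad hconv hdesc x y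
      have hco2 := cocoercive hKpos hGgrad hconv hdesc y x
      -- sum the two cocoercivity inequalities
      have e1 : ⟪g x - μ • x, y - x⟫ = -⟪g x - μ • x, x - y⟫ := by
        rw [← inner_neg_right, neg_sub]
      rw [e1] at hco1
      have e2 : (g y - μ • y) - (g x - μ • x) = -((g x - g y) - μ • (x - y)) := by
        rw [smul_sub]; abel
      have e3 : (g x - μ • x) - (g y - μ • y) = (g x - g y) - μ • (x - y) := by
        rw [smul_sub]; abel
      rw [e2, norm_neg] at hco1
      rw [e3] at hco2
      have esum : ⟪g x - μ • x, x - y⟫ - ⟪g y - μ • y, x - y⟫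
          = ⟪g x - g y, x - y⟫ - μ * ‖x - y‖ ^ 2 := by
        rw [← inner_sub_left, e3, inner_sub_left, real_inner_smul_left,
          real_inner_self_eq_norm_sq]
      have ew : ‖(g x - g y) - μ • (x - y)‖ ^ 2
          = ‖g x - g y‖ ^ 2 - 2 * (μ * ⟪g x - g y, x - y⟫) + μ ^ 2 * ‖x - y‖ ^ 2 := by
        rw [norm_sub_sq_real, real_inner_smul_right, norm_smul, Real.norm_eq_abs,
          abs_of_pos hμ, mul_pow]
      -- from hco1 + hco2 : (1/K) ‖w‖² ≤ ⟪w, d⟫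
      have hw : (1 / K) * ‖(g x - g y) - μ • (x - y)‖ ^ 2
          ≤ ⟪g x - g y, x - y⟫ - μ * ‖x - y‖ ^ 2 := by
        have h12 : ⟪g x - μ • x, x - y⟫ - ⟪g y - μ • y, x - y⟫
            ≥ 2 * (1 / (2 * K)) * ‖(g x - g y) - μ • (x - y)‖ ^ 2 := by
          linarith [hco1, hco2]
        rw [esum] at h12
        have : 2 * (1 / (2 * K)) = 1 / K := by field_simp
        rw [this] at h12
        linarith
      rw [ew] at hw
      have hKne : K ≠ 0 := ne_of_gt hKpos
      have hw' : ‖g x - g y‖ ^ 2 - 2 * (μ * ⟪g x - g y, x - y⟫) + μ ^ 2 * ‖x - y‖ ^ 2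
          ≤ K * (⟪g x - g y, x - y⟫ - μ * ‖x - y‖ ^ 2) := by
        have := mul_le_mul_of_nonneg_left hw (le_of_lt hKpos)
        calc ‖g x - g y‖ ^ 2 - 2 * (μ * ⟪g x - g y, x - y⟫) + μ ^ 2 * ‖x - y‖ ^ 2
            = K * ((1 / K) * (‖g x - g y‖ ^ 2 - 2 * (μ * ⟪g x - g y, x - y⟫)
              + μ ^ 2 * ‖x - y‖ ^ 2)) := by field_simp
          _ ≤ K * (⟪g x - g y, x - y⟫ - μ * ‖x - y‖ ^ 2) := this
      rw [hK] at hw'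
      nlinarith [hw']
  -- conclude
  rw [ge_iff_le]
  have e : μ * L / (μ + L) * ‖x - y‖ ^ 2 + 1 / (μ + L) * ‖g x - g y‖ ^ 2
      = (μ * L * ‖x - y‖ ^ 2 + ‖g x - g y‖ ^ 2) / (μ + L) := by
    field_simp
  rw [e, div_le_iff₀ hpos]
  linarith [key]
end

section
/- Let E be a real inner product space, let f : E → ℝ be differentiable with gradient ∇f, let f be μ-strongly convex on E, let ∇f be L-Lipschitz with 0 < μ ≤ L, and let x* ∈ E satisfy ∇f(x*) = 0. Then for every x ∈ E and every real step size α with 1/L ≤ α ≤ 2/(μ+L), one has ‖(x − α·∇f(x)) − x*‖² ≤ (1 − α·(2μL/(μ+L)))·‖x − x*‖², and moreover 0 ≤ 1 − α·(2μL/(μ+L)) ≤ 1 − 2μ/(μ+L) < 1 whenever μ < L. -/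
open RealInnerProductSpace

section Aux

variable {E : Type*} [NormedAddCommGroup E] [InnerProductSpace ℝ E]

/-- Line-derivative property: `gh` is a "gradient" of `h` along all lines. -/
private def LD (h : E → ℝ) (gh : E → E) : Prop :=
  ∀ (x v : E) (t : ℝ), HasDerivAt (fun s : ℝ => h (x + s • v)) ⟪gh (x + t • v), v⟫ t

private lemma ld_of_grad [CompleteSpace E] {f : E → ℝ} {g : E → E}
    (hgrad : ∀ x, HasGradientAt f (g x) x) : LD f g := by
  intro x v t
  have hc : HasDerivAt (fun s : ℝ => x + s • v) v t := by
    simpa using ((hasDerivAt_id t).smul_const v).const_add x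
  have := (hgrad (x + t • v)).hasFDerivAt.comp_hasDerivAt t hc
  simp [InnerProductSpace.toDual_apply_apply] at this
  exact this

private lemma ld_normsq (c : ℝ) :
    LD (fun x : E => c * ‖x‖ ^ 2) (fun x => (2 * c) • x) := by
  intro x v t
  have heq : (fun s : ℝ => c * ‖x + s • v‖ ^ 2) =
      fun s : ℝ => c * (‖x‖ ^ 2 + 2 * (s * ⟪x, v⟫) + s ^ 2 * ‖v‖ ^ 2) := by
    funext s
    rw [norm_add_sq_real x (s • v), real_inner_smul_right, norm_smul, Real.norm_eq_abs,
      mul_pow, sq_abs]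
  rw [heq]
  have h1 : HasDerivAt (fun s : ℝ => ‖x‖ ^ 2 + 2 * (s * ⟪x, v⟫) + s ^ 2 * ‖v‖ ^ 2)
      (2 * ⟪x, v⟫ + 2 * t * ‖v‖ ^ 2) t := by
    have ha : HasDerivAt (fun s : ℝ => 2 * (s * ⟪x, v⟫)) (2 * ⟪x, v⟫) t := by
      simpa using ((hasDerivAt_id t).mul_const (⟪x, v⟫)).const_mul 2
    have hb : HasDerivAt (fun s : ℝ => s ^ 2 * ‖v‖ ^ 2) (2 * t * ‖v‖ ^ 2) t := by
      have := (hasDerivAt_pow 2 t).mul_const (‖v‖ ^ 2)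
      refine this.congr_deriv ?_
      ring
    have := ((hasDerivAt_const t (‖x‖ ^ 2)).add ha).add hb
    simp at this
    exact this
  have := h1.const_mul c
  refine this.congr_deriv ?_
  rw [real_inner_smul_left, inner_add_left, real_inner_smul_left, real_inner_self_eq_norm_sq]
  ring

private lemma ld_sub {h₁ h₂ : E → ℝ} {g₁ g₂ : E → E} (H1 : LD h₁ g₁) (H2 : LD h₂ g₂) :
    LD (fun x => h₁ x - h₂ x) (fun x => g₁ x - g₂ x) := by
  intro x v t
  have := (H1 x v t).sub (H2 x v t)
  simp only [inner_sub_left]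
  exact this

/-- First-order condition for convexity. -/
private lemma grad_le {h : E → ℝ} {gh : E → E} (ld : LD h gh)
    (hc : ConvexOn ℝ Set.univ h) (x y : E) : ⟪gh x, y - x⟫ ≤ h y - h x := by
  set v := y - x with hv
  have hφ : ConvexOn ℝ Set.univ (fun t : ℝ => h (x + t • v)) := by
    have := hc.comp_affineMap (AffineMap.lineMap x y)
    have he : (h ∘ (AffineMap.lineMap x y : ℝ →ᵃ[ℝ] E)) = fun t : ℝ => h (x + t • v) := by
      funext t
      simp [AffineMap.lineMap_apply, hv, add_comm]
    rw [he] at this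
    simpa using this
  have h01 : ⟪gh x, v⟫ ≤ slope (fun t : ℝ => h (x + t • v)) 0 1 := by
    refine hφ.le_slope_of_hasDerivAt (Set.mem_univ 0) (Set.mem_univ 1) zero_lt_one ?_
    simpa using ld x v 0
  have hs : slope (fun t : ℝ => h (x + t • v)) 0 1 = h y - h x := by
    simp [slope_def_field, hv]
  rw [hs] at h01
  exact h01

/-- Monotone gradient implies convexity. -/
private lemma convexOn_of_mono {h : E → ℝ} {gh : E → E} (ld : LD h gh)
    (mono : ∀ x y, 0 ≤ ⟪gh x - gh y, x - y⟫) : ConvexOn ℝ Set.univ h := by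
  refine ⟨convex_univ, ?_⟩
  intro x _ y _ a b ha hb hab
  set v := y - x with hv
  have hφ : ConvexOn ℝ Set.univ (fun t : ℝ => h (x + t • v)) := by
    apply Monotone.convexOn_univ_of_deriv
    · intro t
      exact (ld x v t).differentiableAt
    · intro s t hst
      rw [(ld x v s).deriv, (ld x v t).deriv]
      rcases eq_or_lt_of_le hst with rfl | hst'
      · exact le_rfl
      · have hm := mono (x + t • v) (x + s • v)
        have he : (x + t • v) - (x + s • v) = (t - s) • v := by module
        rw [he, real_inner_smul_right, inner_sub_left] at hm
        nlinarith [hm, sub_pos.mpr hst']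
  have key := hφ.2 (Set.mem_univ (0 : ℝ)) (Set.mem_univ (1 : ℝ)) ha hb hab
  have h0 : x + ((a * 0 + b * 1) : ℝ) • v = a • x + b • y := by
    have : a = 1 - b := by linarith
    rw [this, hv]
    module
  simp only [smul_eq_mul] at key
  rw [h0] at key
  simpa [hv] using key

/-- Descent lemma. -/
private lemma descent {h : E → ℝ} {gh : E → E} {C : ℝ} (ld : LD h gh)
    (hsm : ConvexOn ℝ Set.univ (fun x => C / 2 * ‖x‖ ^ 2 - h x)) (x y : E) :
    h x ≤ h y + ⟪gh y, x - y⟫ + C / 2 * ‖x - y‖ ^ 2 := by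
  have ldψ : LD (fun x : E => C / 2 * ‖x‖ ^ 2 - h x) (fun x => (2 * (C / 2)) • x - gh x) :=
    ld_sub (ld_normsq (C / 2)) ld
  have key := grad_le ldψ hsm y x
  rw [inner_sub_left, real_inner_smul_left] at key
  have hn : ‖x‖ ^ 2 = ‖y‖ ^ 2 + 2 * ⟪y, x - y⟫ + ‖x - y‖ ^ 2 := by
    have := norm_add_sq_real y (x - y)
    simpa using this
  have hn2 : C / 2 * ‖x‖ ^ 2 =
      C / 2 * ‖y‖ ^ 2 + C * ⟪y, x - y⟫ + C / 2 * ‖x - y‖ ^ 2 := by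
    rw [hn]; ring
  linarith [key, hn2]

/-- Cocoercivity. -/
private lemma coco {h : E → ℝ} {gh : E → E} {C : ℝ} (ld : LD h gh)
    (hc : ConvexOn ℝ Set.univ h)
    (hsm : ConvexOn ℝ Set.univ (fun x => C / 2 * ‖x‖ ^ 2 - h x)) (hC : 0 < C) (x y : E) :
    (1 / C) * ‖gh y - gh x‖ ^ 2 ≤ ⟪gh y - gh x, y - x⟫ := by
  have onesided : ∀ p q : E,
      h p + ⟪gh p, q - p⟫ + 1 / (2 * C) * ‖gh q - gh p‖ ^ 2 ≤ h q := by
    intro p q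
    set d := gh q - gh p with hd
    set z := q - C⁻¹ • d with hz
    have h1 : h p + ⟪gh p, z - p⟫ ≤ h z := by
      have := grad_le ld hc p z
      linarith
    have h2 : h z ≤ h q + ⟪gh q, z - q⟫ + C / 2 * ‖z - q‖ ^ 2 := descent ld hsm z q
    have hzq : z - q = -(C⁻¹ • d) := by rw [hz]; abel
    have e1 : ⟪gh q, z - q⟫ = -(C⁻¹ * ⟪gh q, d⟫) := by
      rw [hzq, inner_neg_right, real_inner_smul_right]
    have e2 : ‖z - q‖ ^ 2 = C⁻¹ ^ 2 * ‖d‖ ^ 2 := by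
      rw [hzq, norm_neg, norm_smul, Real.norm_eq_abs, mul_pow, sq_abs]
    have e3 : z - p = (q - p) - C⁻¹ • d := by rw [hz]; abel
    have e4 : ⟪gh p, z - p⟫ = ⟪gh p, q - p⟫ - C⁻¹ * ⟪gh p, d⟫ := by
      rw [e3, inner_sub_right, real_inner_smul_right]
    have e5 : ⟪gh q, d⟫ - ⟪gh p, d⟫ = ‖d‖ ^ 2 := by
      rw [← inner_sub_left, ← hd, real_inner_self_eq_norm_sq]
    have hC' : C ≠ 0 := ne_of_gt hC
    rw [e1, e2] at h2
    rw [e4] at h1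
    have e5' : C⁻¹ * ⟪gh q, d⟫ - C⁻¹ * ⟪gh p, d⟫ = C⁻¹ * ‖d‖ ^ 2 := by
      rw [← mul_sub, e5]
    have efin' : C⁻¹ * ‖d‖ ^ 2 - C / 2 * (C⁻¹ ^ 2 * ‖d‖ ^ 2) = 1 / (2 * C) * ‖d‖ ^ 2 := by
      field_simp
      ring
    linarith [h1, h2, e5', efin']
  have hxy := onesided x y
  have hyx := onesided y x
  have hrev : ‖gh x - gh y‖ = ‖gh y - gh x‖ := norm_sub_rev _ _
  have hi1 : ⟪gh y, x - y⟫ = -⟪gh y, y - x⟫ := by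
    rw [← inner_neg_right]; congr 1; abel
  have hi2 : ⟪gh y - gh x, y - x⟫ = ⟪gh y, y - x⟫ - ⟪gh x, y - x⟫ := inner_sub_left _ _ _
  have hC' : (0:ℝ) < 2 * C := by linarith
  rw [hrev] at hyx
  rw [hi1] at hyx
  rw [hi2]
  have : 1 / C = 1 / (2 * C) + 1 / (2 * C) := by field_simp; ring
  rw [this]
  nlinarith [hxy, hyx]

end Aux

/-- One-step contraction of the gradient iteration `x⁺ = x - α ∇f(x)` for a `μ`-strongly
convex `f` with `L`-Lipschitz gradient, step size `1/L ≤ α ≤ 2/(μ+L)`, and `∇f(x*) = 0`. -/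
theorem gradient_step_contraction
    {E : Type*} [NormedAddCommGroup E] [InnerProductSpace ℝ E] [CompleteSpace E]
    (f : E → ℝ) (g : E → E) (μ L : ℝ) (xstar : E)
    (hμ : 0 < μ) (hμL : μ ≤ L)
    (hgrad : ∀ x, HasGradientAt f (g x) x)
    (hsc : ConvexOn ℝ Set.univ (fun x => f x - μ / 2 * ‖x‖ ^ 2))
    (hlip : ∀ x y, ‖g x - g y‖ ≤ L * ‖x - y‖)
    (hopt : g xstar = 0) :
    ∀ (x : E) (α : ℝ), 1 / L ≤ α → α ≤ 2 / (μ + L) →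
      ‖(x - α • g x) - xstar‖ ^ 2 ≤ (1 - α * (2 * μ * L / (μ + L))) * ‖x - xstar‖ ^ 2 ∧
      0 ≤ 1 - α * (2 * μ * L / (μ + L)) ∧
      1 - α * (2 * μ * L / (μ + L)) ≤ 1 - 2 * μ / (μ + L) ∧
      (μ < L → 1 - 2 * μ / (μ + L) < 1) := by
  have hL : (0:ℝ) < L := lt_of_lt_of_le hμ hμL
  have hμL' : (0:ℝ) < μ + L := by linarith
  -- gradient structure of h = f - μ/2 ‖·‖²
  have ldf : LD f g := ld_of_grad hgrad
  have ldh : LD (fun x : E => f x - μ / 2 * ‖x‖ ^ 2) (fun x => g x - μ • x) := by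
    have := ld_sub ldf (ld_normsq (E := E) (μ / 2))
    have h2 : (2 * (μ / 2)) = μ := by ring
    simpa [h2] using this
  -- convexity of ψ = L/2 ‖·‖² - f
  have ldψ : LD (fun x : E => L / 2 * ‖x‖ ^ 2 - f x) (fun x => L • x - g x) := by
    have := ld_sub (ld_normsq (E := E) (L / 2)) ldf
    have h2 : (2 * (L / 2)) = L := by ring
    simpa [h2] using this
  have hψ : ConvexOn ℝ Set.univ (fun x : E => L / 2 * ‖x‖ ^ 2 - f x) := by
    apply convexOn_of_mono ldψ
    intro x y
    have e : (L • x - g x) - (L • y - g y) = L • (x - y) - (g x - g y) := by module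
    rw [e, inner_sub_left, real_inner_smul_left, real_inner_self_eq_norm_sq]
    have h1 := hlip x y
    have h2 := real_inner_le_norm (g x - g y) (x - y)
    nlinarith [norm_nonneg (x - y), norm_nonneg (g x - g y)]
  -- strong monotonicity of g
  have smono : ∀ x y : E, μ * ‖x - y‖ ^ 2 ≤ ⟪g x - g y, x - y⟫ := by
    intro x y
    have h1 := grad_le ldh hsc x y
    have h2 := grad_le ldh hsc y x
    have e1 : ⟪g x - μ • x, y - x⟫ = ⟪g x, y - x⟫ - μ * ⟪x, y - x⟫ := by
      rw [inner_sub_left, real_inner_smul_left]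
    have e2 : ⟪g y - μ • y, x - y⟫ = ⟪g y, x - y⟫ - μ * ⟪y, x - y⟫ := by
      rw [inner_sub_left, real_inner_smul_left]
    rw [e1] at h1; rw [e2] at h2
    have e3 : ⟪g x - g y, x - y⟫ = ⟪g x, x - y⟫ - ⟪g y, x - y⟫ := inner_sub_left _ _ _
    have e4 : ⟪g x, y - x⟫ = -⟪g x, x - y⟫ := by
      rw [← inner_neg_right]; congr 1; abel
    have e5 : ⟪x, y - x⟫ = -⟪x, x - y⟫ := by
      rw [← inner_neg_right]; congr 1; abel
    have e6 : ⟪y, x - y⟫ = ⟪x, x - y⟫ - ‖x - y‖ ^ 2 := by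
      have h7 : ⟪x - (x - y), x - y⟫ = ⟪x, x - y⟫ - ⟪x - y, x - y⟫ := inner_sub_left _ _ _
      rw [real_inner_self_eq_norm_sq] at h7
      simpa using h7
    rw [e4, e5] at h1
    rw [e6] at h2
    rw [e3]
    linarith
  -- key inequality
  have key : ∀ x : E, ‖g x‖ ^ 2 + μ * L * ‖x - xstar‖ ^ 2 ≤ (μ + L) * ⟪g x, x - xstar⟫ := by
    intro x
    have hsm := smono x xstar
    rw [hopt, sub_zero] at hsm
    have hli := hlip x xstar
    rw [hopt, sub_zero] at hli
    rcases eq_or_lt_of_le hμL with rfl | hlt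
    · nlinarith [norm_nonneg (g x), norm_nonneg (x - xstar), real_inner_le_norm (g x) (x - xstar)]
    · have hC : (0:ℝ) < L - μ := by linarith
      have hsm2 : ConvexOn ℝ Set.univ
          (fun y : E => (L - μ) / 2 * ‖y‖ ^ 2 - (f y - μ / 2 * ‖y‖ ^ 2)) := by
        have he : (fun y : E => (L - μ) / 2 * ‖y‖ ^ 2 - (f y - μ / 2 * ‖y‖ ^ 2)) =
            fun y : E => L / 2 * ‖y‖ ^ 2 - f y := by funext y; ring
        rw [he]; exact hψ
      have hco := coco ldh hsc hsm2 hC xstar x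
      -- gh x - gh xstar = g x - μ • (x - xstar)
      have he2 : (g x - μ • x) - (g xstar - μ • xstar) = g x - μ • (x - xstar) := by
        rw [hopt]; module
      rw [he2] at hco
      set u := g x with hu
      set v := x - xstar with hv
      have en : ‖u - μ • v‖ ^ 2 = ‖u‖ ^ 2 - 2 * (μ * ⟪u, v⟫) + μ ^ 2 * ‖v‖ ^ 2 := by
        rw [norm_sub_sq_real, real_inner_smul_right, norm_smul, Real.norm_eq_abs, mul_pow, sq_abs]
      have ei : ⟪u - μ • v, v⟫ = ⟪u, v⟫ - μ * ‖v‖ ^ 2 := by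
        rw [inner_sub_left, real_inner_smul_left, real_inner_self_eq_norm_sq]
      rw [en, ei] at hco
      have hC' : (L - μ) ≠ 0 := ne_of_gt hC
      have hco2 : ‖u‖ ^ 2 - 2 * (μ * ⟪u, v⟫) + μ ^ 2 * ‖v‖ ^ 2 ≤
          (L - μ) * (⟪u, v⟫ - μ * ‖v‖ ^ 2) := by
        have := mul_le_mul_of_nonneg_left hco (le_of_lt hC)
        rw [← mul_assoc] at this
        field_simp at this
        linarith [this]
      nlinarith [hco2]
  intro x α hα1 hα2
  have hα0 : 0 < α := lt_of_lt_of_le (by positivity) hα1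
  have hαL : 1 ≤ α * L := by
    rw [div_le_iff₀ hL] at hα1; linarith
  have hα2' : α * (μ + L) ≤ 2 := by
    rw [le_div_iff₀ hμL'] at hα2; linarith
  set u := g x with hu
  set v := x - xstar with hv
  have hk := key x
  have ht : α * (2 * μ * L / (μ + L)) * (μ + L) = α * (2 * μ * L) := by
    field_simp
  have hs : 2 * μ / (μ + L) * (μ + L) = 2 * μ := by field_simp
  have hexp : ‖(x - α • u) - xstar‖ ^ 2 = ‖v‖ ^ 2 - 2 * (α * ⟪u, v⟫) + α ^ 2 * ‖u‖ ^ 2 := by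
    have he : (x - α • u) - xstar = v - α • u := by rw [hv]; abel
    rw [he, norm_sub_sq_real, real_inner_smul_right, norm_smul, Real.norm_eq_abs, mul_pow, sq_abs,
      real_inner_comm]
  refine ⟨?_, ?_, ?_, ?_⟩
  · rw [hexp]
    rw [← sub_nonneg]
    have expand : (1 - α * (2 * μ * L / (μ + L))) * ‖v‖ ^ 2 -
        (‖v‖ ^ 2 - 2 * (α * ⟪u, v⟫) + α ^ 2 * ‖u‖ ^ 2) =
        2 * (α * ⟪u, v⟫) - α * (2 * μ * L / (μ + L)) * ‖v‖ ^ 2 - α ^ 2 * ‖u‖ ^ 2 := by ring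
    rw [expand]
    rw [← mul_nonneg_iff_of_pos_right hμL']
    have expand2 : (2 * (α * ⟪u, v⟫) - α * (2 * μ * L / (μ + L)) * ‖v‖ ^ 2 -
        α ^ 2 * ‖u‖ ^ 2) * (μ + L) =
        2 * α * ((μ + L) * ⟪u, v⟫) - (α * (2 * μ * L / (μ + L)) * (μ + L)) * ‖v‖ ^ 2 -
        α ^ 2 * (μ + L) * ‖u‖ ^ 2 := by ring
    rw [expand2, ht]
    nlinarith [mul_le_mul_of_nonneg_left hk (le_of_lt hα0), sq_nonneg ‖u‖,
      mul_nonneg (mul_nonneg hα0.le (sub_nonneg.mpr hα2')) (sq_nonneg ‖u‖)]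
  · nlinarith [sq_nonneg (μ - L), mul_pos hα0 hμL', sq_nonneg (μ + L),
      mul_le_mul_of_nonneg_left hα2' (by positivity : (0:ℝ) ≤ 2 * μ * L / (μ + L)),
      mul_pos (mul_pos (by linarith : (0:ℝ) < 2 * μ) hL) hμL']
  · have h4 : (1 / L) * (2 * μ * L / (μ + L)) = 2 * μ / (μ + L) := by
      field_simp
    have h3 : 2 * μ / (μ + L) ≤ α * (2 * μ * L / (μ + L)) := by
      rw [← h4]
      exact mul_le_mul_of_nonneg_right hα1 (by positivity)
    linarith
  · intro hlt
    have : 0 < 2 * μ / (μ + L) := by positivity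
    linarith
end

section
/- Let E be a real inner product space, let f : E → ℝ be differentiable with gradient ∇f, let f be μ-strongly convex on E, let ∇f be L-Lipschitz with 0 < μ ≤ L, and let x* ∈ E satisfy ∇f(x*) = 0. Let x : ℕ → E be a sequence satisfying x(k+1) = x(k) − α(k)·∇f(x(k)) for all k, where for each k the step size is the second Barzilai–Borwein step size α(k) = ⟨s(k−1), y(k−1)⟩ / ‖y(k−1)‖² with s(k−1) = x(k) − x(k−1), y(k−1) = ∇f(x(k)) − ∇f(x(k−1)) ≠ 0, and suppose 1/L ≤ α(k) ≤ 2/(μ+L) for all k. Then for all k: ‖x(k+1) − x*‖ ≤ √(1 − 2μ/(μ+L))·‖x(k) − x*‖, and √(1 − 2μ/(μ+L)) < 1 whenever μ < L; i.e. the iterates converge Q-linearly to x*. -/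
open RealInnerProductSpace

section Aux

open Filter Topology

variable {E : Type*} [NormedAddCommGroup E] [InnerProductSpace ℝ E] [CompleteSpace E]

private lemma line_deriv_aux {φ : E → ℝ} {G : E → E} (hgrad : ∀ z, HasGradientAt φ (G z) z)
    (x v : E) (t : ℝ) :
    HasDerivAt (fun s : ℝ => φ (x + s • v)) ⟪G (x + t • v), v⟫ t := by
  have h1 : HasDerivAt (fun s : ℝ => x + s • v) v t := by
    simpa using ((hasDerivAt_id t).smul_const v).const_add x
  have h2 := (hasGradientAt_iff_hasFDerivAt.mp (hgrad (x + t • v)))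
  have := h2.comp_hasDerivAt t h1
  exact this

private lemma sq_gradient_aux (c : ℝ) (z : E) :
    HasGradientAt (fun w : E => c * ‖w‖ ^ 2) ((2 * c) • z) z := by
  rw [hasGradientAt_iff_hasFDerivAt]
  have h : HasFDerivAt (fun w : E => ⟪w, w⟫) ((InnerProductSpace.toDual ℝ E) ((2:ℝ) • z)) z := by
    have := (hasFDerivAt_id z).inner ℝ (hasFDerivAt_id z)
    exact this.congr_fderiv (by ext v; simp [real_inner_comm, two_smul, inner_add_left])
  have h2 : HasFDerivAt (fun w : E => c * ⟪w, w⟫)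
      (c • (InnerProductSpace.toDual ℝ E) ((2:ℝ) • z)) z := h.const_mul c
  have h3 : (fun w : E => c * ⟪w, w⟫) = fun w : E => c * ‖w‖ ^ 2 := by
    funext w; rw [real_inner_self_eq_norm_sq]
  rw [h3] at h2
  refine h2.congr_fderiv ?_
  ext v
  simp [InnerProductSpace.toDual_apply_apply, inner_smul_left]
  ring

private lemma hasGradientAt_sub_aux {φ ψ : E → ℝ} {a b : E} {z : E}
    (hφ : HasGradientAt φ a z) (hψ : HasGradientAt ψ b z) :
    HasGradientAt (fun w => φ w - ψ w) (a - b) z := by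
  rw [hasGradientAt_iff_hasFDerivAt] at *
  rw [map_sub]
  exact hφ.sub hψ

private lemma inner_pair_aux {E : Type*} [NormedAddCommGroup E] [InnerProductSpace ℝ E]
    (A B v : E) : ⟪B, v⟫ + ⟪A, -v⟫ = -⟪A - B, v⟫ := by
  rw [inner_neg_right, inner_sub_left]; ring

private lemma convex_first_order_aux {φ : E → ℝ} {G : E → E} (hconv : ConvexOn ℝ Set.univ φ)
    (hgrad : ∀ z, HasGradientAt φ (G z) z) (x y : E) :
    φ x + ⟪G x, y - x⟫ ≤ φ y := by
  have hd : HasDerivAt (fun s : ℝ => φ (x + s • (y - x))) ⟪G x, y - x⟫ 0 := by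
    simpa using line_deriv_aux hgrad x (y - x) 0
  have key : Tendsto (slope (fun s : ℝ => φ (x + s • (y - x))) 0) (𝓝[>] 0)
      (𝓝 ⟪G x, y - x⟫) :=
    (hasDerivAt_iff_tendsto_slope.mp hd).mono_left
      (nhdsWithin_mono _ fun t ht => ne_of_gt ht)
  have hb : ∀ᶠ t in 𝓝[>] (0:ℝ),
      slope (fun s : ℝ => φ (x + s • (y - x))) 0 t ≤ φ y - φ x := by
    filter_upwards [Ioo_mem_nhdsGT_of_mem (by norm_num : (0:ℝ) ∈ Set.Ico 0 1)] with t ht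
    have hcv := hconv.2 (Set.mem_univ x) (Set.mem_univ y)
      (by linarith [ht.2] : (0:ℝ) ≤ 1 - t) ht.1.le (by ring)
    have hpt : (1 - t) • x + t • y = x + t • (y - x) := by module
    rw [hpt] at hcv
    rw [slope_def_field]
    simp only [smul_eq_mul, zero_smul, add_zero, sub_zero] at *
    rw [div_le_iff₀ ht.1]
    nlinarith [ht.1]
  have := le_of_tendsto key hb
  linarith

private lemma convex_of_first_order_aux {φ : E → ℝ} {G : E → E}
    (h : ∀ x y : E, φ x + ⟪G x, y - x⟫ ≤ φ y) : ConvexOn ℝ Set.univ φ := by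
  refine ⟨convex_univ, fun p _ q _ a b ha hb hab => ?_⟩
  set z := a • p + b • q with hz
  have h1 := h z p
  have h2 := h z q
  have e : a • (p - z) + b • (q - z) = (a • p + b • q) - (a + b) • z := by module
  rw [hab, one_smul, ← hz, sub_self] at e
  have hz0 : ⟪G z, a • (p - z) + b • (q - z)⟫ = 0 := by rw [e, inner_zero_right]
  rw [inner_add_right, real_inner_smul_right, real_inner_smul_right] at hz0
  simp only [smul_eq_mul]
  have e1 := mul_le_mul_of_nonneg_left h1 ha
  have e2 := mul_le_mul_of_nonneg_left h2 hb
  rw [mul_add] at e1 e2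
  have e3 : a * φ z + b * φ z = φ z := by rw [← add_mul, hab, one_mul]
  linarith

private lemma descent_lemma_aux {φ : E → ℝ} {G : E → E} {L : ℝ}
    (hgrad : ∀ z, HasGradientAt φ (G z) z)
    (hlip : ∀ a b : E, ‖G a - G b‖ ≤ L * ‖a - b‖) (x y : E) :
    φ y ≤ φ x + ⟪G x, y - x⟫ + L / 2 * ‖y - x‖ ^ 2 := by
  set v := y - x with hv
  set χ : ℝ → ℝ := fun t => φ (x + t • v) - t * ⟪G x, v⟫ - L / 2 * t ^ 2 * ‖v‖ ^ 2 with hχ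
  set χ' : ℝ → ℝ := fun t => ⟪G (x + t • v), v⟫ - ⟪G x, v⟫ - L * t * ‖v‖ ^ 2 with hχ'
  have hd : ∀ t : ℝ, HasDerivAt χ (χ' t) t := by
    intro t
    have d1 := line_deriv_aux hgrad x v t
    have d2 : HasDerivAt (fun t : ℝ => t * ⟪G x, v⟫) ⟪G x, v⟫ t := by
      simpa using (hasDerivAt_id t).mul_const (⟪G x, v⟫ : ℝ)
    have d3 : HasDerivAt (fun t : ℝ => L / 2 * t ^ 2 * ‖v‖ ^ 2) (L * t * ‖v‖ ^ 2) t := by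
      have := ((hasDerivAt_pow 2 t).const_mul (L / 2)).mul_const (‖v‖ ^ 2)
      refine this.congr_deriv ?_
      ring
    exact (d1.sub d2).sub d3
  have hmono : AntitoneOn χ (Set.Icc 0 1) := by
    apply antitoneOn_of_hasDerivWithinAt_nonpos (f' := χ') (convex_Icc 0 1)
    · exact fun t _ => ((hd t).continuousAt).continuousWithinAt
    · intro t _
      exact (hd t).hasDerivWithinAt
    · intro t ht
      rw [interior_Icc] at ht
      have hle : ⟪G (x + t • v) - G x, v⟫ ≤ ‖G (x + t • v) - G x‖ * ‖v‖ :=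
        real_inner_le_norm _ _
      have hl2 : ‖G (x + t • v) - G x‖ ≤ L * (t * ‖v‖) := by
        have := hlip (x + t • v) x
        simpa [norm_smul, abs_of_pos ht.1] using this
      have hinner : ⟪G (x + t • v) - G x, v⟫ = ⟪G (x + t • v), v⟫ - ⟪G x, v⟫ :=
        inner_sub_left _ _ _
      have hvnn : (0:ℝ) ≤ ‖v‖ := norm_nonneg v
      simp only [hχ']
      nlinarith [mul_le_mul_of_nonneg_right hl2 hvnn]
  have h01 := hmono (Set.left_mem_Icc.2 zero_le_one) (Set.right_mem_Icc.2 zero_le_one)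
    zero_le_one
  simp only [hχ, zero_smul, add_zero, one_smul, zero_mul, zero_pow, mul_zero, sub_zero,
    one_pow, mul_one, one_mul] at h01
  have hxy : x + v = y := by simp [hv]
  rw [hxy] at h01
  linarith

/-- The interpolation (coercivity) inequality for a `μ`-strongly convex function with
`L`-Lipschitz gradient. -/
private lemma interpolation_aux {f : E → ℝ} {g : E → E} {μ L : ℝ} (hμ : 0 < μ) (hμL : μ ≤ L)
    (hgrad : ∀ z, HasGradientAt f (g z) z)
    (hsc : ConvexOn ℝ Set.univ (fun z => f z - μ / 2 * ‖z‖ ^ 2))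
    (hlip : ∀ a b : E, ‖g a - g b‖ ≤ L * ‖a - b‖) (p q : E) :
    μ * L * ‖p - q‖ ^ 2 + ‖g p - g q‖ ^ 2 ≤ (μ + L) * ⟪g p - g q, p - q⟫ := by
  have hL : 0 < L := lt_of_lt_of_le hμ hμL
  -- gradient of h := f - μ/2 ‖·‖²
  have hGh : ∀ z, HasGradientAt (fun w => f w - μ / 2 * ‖w‖ ^ 2) (g z - μ • z) z := by
    intro z
    have hs := sq_gradient_aux (μ / 2) z
    rw [show 2 * (μ / 2) = μ by ring] at hs
    exact hasGradientAt_sub_aux (hgrad z) hs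
  -- expansion identities
  have hnorm_sub : ∀ a b : E, ‖b - a‖ ^ 2 = ‖b‖ ^ 2 - 2 * ⟪a, b⟫ + ‖a‖ ^ 2 := by
    intro a b; rw [norm_sub_sq_real, real_inner_comm]
  have hinner_a : ∀ a b : E, ⟪a, b - a⟫ = ⟪a, b⟫ - ‖a‖ ^ 2 := by
    intro a b; rw [inner_sub_right, real_inner_self_eq_norm_sq]
  -- first-order inequality for q' := L/2‖·‖² - f (convexity of q')
  have hq_fo : ∀ a b : E, (L / 2 * ‖a‖ ^ 2 - f a) + ⟪L • a - g a, b - a⟫ ≤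
      L / 2 * ‖b‖ ^ 2 - f b := by
    intro a b
    have hdesc := descent_lemma_aux hgrad hlip a b
    rw [inner_sub_left, real_inner_smul_left, hinner_a a b]
    rw [hnorm_sub a b] at hdesc
    linarith
  have hqconv : ConvexOn ℝ Set.univ (fun z => L / 2 * ‖z‖ ^ 2 - f z) :=
    convex_of_first_order_aux (G := fun z => L • z - g z) hq_fo
  have hGq : ∀ z, HasGradientAt (fun w => L / 2 * ‖w‖ ^ 2 - f w) (L • z - g z) z := by
    intro z
    have hs := sq_gradient_aux (L / 2) z
    rw [show 2 * (L / 2) = L by ring] at hs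
    exact hasGradientAt_sub_aux hs (hgrad z)
  -- descent lemma for h with constant L - μ
  have hdesc_h : ∀ a b : E, (f b - μ / 2 * ‖b‖ ^ 2) ≤ (f a - μ / 2 * ‖a‖ ^ 2) +
      ⟪g a - μ • a, b - a⟫ + (L - μ) / 2 * ‖b - a‖ ^ 2 := by
    intro a b
    have := convex_first_order_aux hqconv hGq a b
    rw [inner_sub_left, real_inner_smul_left, hinner_a a b] at this
    rw [inner_sub_left, real_inner_smul_left, hinner_a a b, hnorm_sub a b]
    linarith
  rcases eq_or_lt_of_le hμL with hEq | hlt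
  · -- case μ = L : use plain monotonicity of the gradient of h plus Lipschitz bound
    subst hEq
    have m1 := convex_first_order_aux hsc hGh p q
    have m2 := convex_first_order_aux hsc hGh q p
    have hdiff : (g p - μ • p) - (g q - μ • q) = (g p - g q) - μ • (p - q) := by module
    have hexp : ⟪g q - μ • q, p - q⟫ + ⟪g p - μ • p, q - p⟫ =
        -(⟪g p - g q, p - q⟫ - μ * ‖p - q‖ ^ 2) := by
      have hpair := inner_pair_aux (g p - μ • p) (g q - μ • q) (p - q)
      rw [neg_sub] at hpair
      rw [hpair, hdiff, inner_sub_left, real_inner_smul_left, real_inner_self_eq_norm_sq]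
    have hmon : μ * ‖p - q‖ ^ 2 ≤ ⟪g p - g q, p - q⟫ := by
      have := add_le_add m1 m2
      nlinarith [hexp, this]
    have hlipsq : ‖g p - g q‖ ^ 2 ≤ μ ^ 2 * ‖p - q‖ ^ 2 := by
      have h1 := hlip p q
      nlinarith [norm_nonneg (g p - g q), norm_nonneg (p - q)]
    nlinarith [hmon, hlipsq]
  · -- case μ < L : co-coercivity of the gradient of h
    set M := L - μ with hM
    have hMpos : 0 < M := by simp [hM]; linarith
    -- co-coercivity one-directional inequality
    have cocoer : ∀ a b : E,
        (f b - μ / 2 * ‖b‖ ^ 2) + ⟪g b - μ • b, a - b⟫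
          + 1 / (2 * M) * ‖(g a - μ • a) - (g b - μ • b)‖ ^ 2 ≤ (f a - μ / 2 * ‖a‖ ^ 2) := by
      intro a b
      set u := (g a - μ • a) - (g b - μ • b) with hu
      set w := a - (1 / M) • u with hw
      have step1 := convex_first_order_aux hsc hGh b w
      have step2 := hdesc_h a w
      have hwa : w - a = -((1 / M) • u) := by rw [hw]; abel
      have e1 : ⟪g a - μ • a, w - a⟫ = ⟪g b - μ • b, w - a⟫ - (1 / M) * ‖u‖ ^ 2 := by
        rw [show (g a - μ • a : E) = (g b - μ • b) + u by rw [hu]; abel, inner_add_left]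
        congr 1
        rw [hwa, inner_neg_right, real_inner_smul_right, real_inner_self_eq_norm_sq]
      have e2 : ‖w - a‖ ^ 2 = (1 / M) ^ 2 * ‖u‖ ^ 2 := by
        rw [hwa, norm_neg, norm_smul, mul_pow]
        congr 1
        rw [Real.norm_eq_abs, abs_of_pos (by positivity : (0:ℝ) < 1 / M)]
      have e3 : ⟪g b - μ • b, w - b⟫ - ⟪g b - μ • b, w - a⟫ = ⟪g b - μ • b, a - b⟫ := by
        rw [← inner_sub_right]
        congr 1
        abel
      rw [e1, e2] at step2
      have hM2 : (L - μ) / 2 * ((1 / M) ^ 2 * ‖u‖ ^ 2) = 1 / (2 * M) * ‖u‖ ^ 2 := by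
        rw [← hM]; field_simp
      rw [hM2] at step2
      -- step1 : h b + ⟪Gh b, w - b⟫ ≤ h w;  step2 : h w ≤ h a + ⟪Gh b, w-a⟫ - (1/M)‖u‖² + 1/(2M)‖u‖²
      have := le_trans step1 step2
      have hMinv : (1 : ℝ) / M * ‖u‖ ^ 2 - 1 / (2 * M) * ‖u‖ ^ 2 = 1 / (2 * M) * ‖u‖ ^ 2 := by
        field_simp
        ring
      linarith [e3, hMinv]
    have c1 := cocoer p q
    have c2 := cocoer q p
    have huu : (g q - μ • q) - (g p - μ • p) = -((g p - μ • p) - (g q - μ • q)) := by abel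
    rw [huu, norm_neg] at c2
    -- add the two co-coercivity inequalities
    have hsum : ⟪g q - μ • q, p - q⟫ + ⟪g p - μ • p, q - p⟫
        + 2 * (1 / (2 * M)) * ‖(g p - μ • p) - (g q - μ • q)‖ ^ 2 ≤ 0 := by linarith
    have hexp1 : ⟪g q - μ • q, p - q⟫ + ⟪g p - μ • p, q - p⟫ =
        -⟪(g p - μ • p) - (g q - μ • q), p - q⟫ := by
      have hpair := inner_pair_aux (g p - μ • p) (g q - μ • q) (p - q)
      rw [neg_sub] at hpair
      exact hpair
    have hdiff : (g p - μ • p) - (g q - μ • q) = (g p - g q) - μ • (p - q) := by module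
    have hexp2 : ⟪(g p - μ • p) - (g q - μ • q), p - q⟫ =
        ⟪g p - g q, p - q⟫ - μ * ‖p - q‖ ^ 2 := by
      rw [hdiff, inner_sub_left, real_inner_smul_left, real_inner_self_eq_norm_sq]
    have hexp3 : ‖(g p - μ • p) - (g q - μ • q)‖ ^ 2 =
        ‖g p - g q‖ ^ 2 - 2 * μ * ⟪g p - g q, p - q⟫ + μ ^ 2 * ‖p - q‖ ^ 2 := by
      rw [hdiff, norm_sub_sq_real, real_inner_smul_right, norm_smul, mul_pow,
        Real.norm_eq_abs, abs_of_pos hμ]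
      ring
    rw [hexp1, hexp3] at hsum
    rw [hexp2] at hsum
    -- hsum : -(t - μn) + (1/M)(U - 2μt + μ²n) ≤ 0
    have h2M : 2 * (1 / (2 * M)) = 1 / M := by field_simp
    rw [h2M] at hsum
    have := mul_le_mul_of_nonneg_left hsum hMpos.le
    rw [mul_zero] at this
    have hMne : M ≠ 0 := ne_of_gt hMpos
    have hexpand : M * (-(⟪g p - g q, p - q⟫ - μ * ‖p - q‖ ^ 2) +
        1 / M * (‖g p - g q‖ ^ 2 - 2 * μ * ⟪g p - g q, p - q⟫ + μ ^ 2 * ‖p - q‖ ^ 2)) =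
        M * (-(⟪g p - g q, p - q⟫ - μ * ‖p - q‖ ^ 2)) +
        (‖g p - g q‖ ^ 2 - 2 * μ * ⟪g p - g q, p - q⟫ + μ ^ 2 * ‖p - q‖ ^ 2) := by
      field_simp
    rw [hexpand] at this
    simp only [hM] at this ⊢
    nlinarith [this]

end Aux

/-- Lemma 2 of the paper: Q-linear convergence of the centralized Barzilai–Borwein method
with the second BB step size `α(k) = ⟪s(k-1), y(k-1)⟫ / ‖y(k-1)‖²`, provided
`1/L ≤ α(k) ≤ 2/(μ+L)`, for a `μ`-strongly convex `f` with `L`-Lipschitz gradient. -/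
theorem centralized_BB_second_stepsize_Q_linear
    {E : Type*} [NormedAddCommGroup E] [InnerProductSpace ℝ E] [CompleteSpace E]
    (f : E → ℝ) (g : E → E) (μ L : ℝ) (xstar : E)
    (hμ : 0 < μ) (hμL : μ ≤ L)
    (hgrad : ∀ x, HasGradientAt f (g x) x)
    (hsc : ConvexOn ℝ Set.univ (fun x => f x - μ / 2 * ‖x‖ ^ 2))
    (hlip : ∀ x y, ‖g x - g y‖ ≤ L * ‖x - y‖)
    (hopt : g xstar = 0)
    (x : ℕ → E) (α : ℕ → ℝ)
    (hiter : ∀ k, x (k + 1) = x k - α k • g (x k))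
    (hy_ne : ∀ k, g (x (k + 1)) - g (x k) ≠ 0)
    (hBB : ∀ k, α (k + 1) =
      ⟪x (k + 1) - x k, g (x (k + 1)) - g (x k)⟫ / ‖g (x (k + 1)) - g (x k)‖ ^ 2)
    (hα_lb : ∀ k, 1 / L ≤ α k)
    (hα_ub : ∀ k, α k ≤ 2 / (μ + L)) :
    (∀ k, ‖x (k + 1) - xstar‖ ≤ Real.sqrt (1 - 2 * μ / (μ + L)) * ‖x k - xstar‖) ∧
    (μ < L → Real.sqrt (1 - 2 * μ / (μ + L)) < 1) := by
  have hL : 0 < L := lt_of_lt_of_le hμ hμL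
  have hμLpos : 0 < μ + L := by linarith
  have hcnn : (0:ℝ) ≤ 1 - 2 * μ / (μ + L) := by
    rw [sub_nonneg, div_le_one hμLpos]; linarith
  constructor
  · intro k
    have interp := interpolation_aux hμ hμL hgrad hsc hlip (x k) xstar
    rw [hopt, sub_zero] at interp
    have hdiff : x (k + 1) - xstar = (x k - xstar) - α k • g (x k) := by
      rw [hiter k]; abel
    have hsq : ‖x (k + 1) - xstar‖ ^ 2 = ‖x k - xstar‖ ^ 2
        - 2 * α k * ⟪g (x k), x k - xstar⟫ + α k ^ 2 * ‖g (x k)‖ ^ 2 := by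
      rw [hdiff, norm_sub_sq_real, real_inner_smul_right, norm_smul, mul_pow,
        Real.norm_eq_abs, sq_abs, real_inner_comm]
      ring
    have halb := hα_lb k
    have haub := hα_ub k
    have hapos : 0 < α k := lt_of_lt_of_le (by positivity) halb
    have haL : 1 ≤ α k * L := (div_le_iff₀ hL).mp halb
    have haub2 : α k * (μ + L) ≤ 2 := by
      rw [le_div_iff₀ hμLpos] at haub; linarith [haub]
    have t1 : 0 ≤ α k * ‖g (x k)‖ ^ 2 * (2 - α k * (μ + L)) :=
      mul_nonneg (mul_nonneg hapos.le (sq_nonneg _)) (by linarith)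
    have t2 : 0 ≤ μ * ‖x k - xstar‖ ^ 2 * (α k * L - 1) :=
      mul_nonneg (mul_nonneg hμ.le (sq_nonneg _)) (by linarith)
    have t3 := mul_le_mul_of_nonneg_left interp (by positivity : (0:ℝ) ≤ 2 * α k)
    have goal2 : (‖x k - xstar‖ ^ 2 - 2 * α k * ⟪g (x k), x k - xstar⟫
        + α k ^ 2 * ‖g (x k)‖ ^ 2) * (μ + L) ≤
        (μ + L) * ‖x k - xstar‖ ^ 2 - 2 * μ * ‖x k - xstar‖ ^ 2 := by
      nlinarith [t1, t2, t3]
    have hkey : ‖x (k + 1) - xstar‖ ^ 2 ≤ (1 - 2 * μ / (μ + L)) * ‖x k - xstar‖ ^ 2 := by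
      have hrw : (1 - 2 * μ / (μ + L)) * ‖x k - xstar‖ ^ 2 =
          ((μ + L) * ‖x k - xstar‖ ^ 2 - 2 * μ * ‖x k - xstar‖ ^ 2) / (μ + L) := by
        field_simp
      rw [hsq, hrw, le_div_iff₀ hμLpos]
      linarith [goal2]
    calc ‖x (k + 1) - xstar‖ = Real.sqrt (‖x (k + 1) - xstar‖ ^ 2) :=
          (Real.sqrt_sq (norm_nonneg _)).symm
      _ ≤ Real.sqrt ((1 - 2 * μ / (μ + L)) * ‖x k - xstar‖ ^ 2) := Real.sqrt_le_sqrt hkey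
      _ = Real.sqrt (1 - 2 * μ / (μ + L)) * ‖x k - xstar‖ := by
          rw [Real.sqrt_mul hcnn, Real.sqrt_sq (norm_nonneg _)]
  · intro hlt
    have h1 : 1 - 2 * μ / (μ + L) < 1 := by
      have : 0 < 2 * μ / (μ + L) := by positivity
      linarith
    calc Real.sqrt (1 - 2 * μ / (μ + L)) < Real.sqrt 1 := Real.sqrt_lt_sqrt hcnn h1
      _ = 1 := Real.sqrt_one
end

section
/- Let n, p, k be natural numbers with n ≥ 1 and let ‖·‖ denote the Frobenius norm on n×p real matrices. Let W be an n×n real matrix, J the n×n all-ones matrix, and λ ≥ 0 a real number such that ‖W^j − (1/n)·J‖ ≤ λ^j for every j ≥ 0, interpreting this for the induced action on n×p matrices (i.e. ‖(W^j − (1/n)·J)·M‖ ≤ λ^j·‖M‖ for all M). Let α : ℕ → ℝ be nonnegative, let V : ℕ → Matrix (Fin n) (Fin p) ℝ satisfy ‖V(m)‖ ≤ G for all m with G ≥ 0, and let X : ℕ → Matrix (Fin n) (Fin p) ℝ satisfy X(0) = 0 and X(m+1) = W·X(m) − α(m)·V(m) for all m. Then ‖X(k) − (1/n)·J·X(k)‖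 ≤ G · (∑_{m=0}^{k−1} α(m)²)^{1/2} · (∑_{m=0}^{k−1} λ^{2(k−1−m)})^{1/2}. -/
open Finset

noncomputable def frobNorm {n p : ℕ} (M : Matrix (Fin n) (Fin p) ℝ) : ℝ :=
  Real.sqrt (∑ i, ∑ j, (M i j) ^ 2)

noncomputable def toE (n p : ℕ) : Matrix (Fin n) (Fin p) ℝ →ₗ[ℝ] EuclideanSpace ℝ (Fin n × Fin p) where
  toFun M := (WithLp.equiv 2 _).symm (fun ij => M ij.1 ij.2)
  map_add' := by intros; rfl
  map_smul' := by intros; rfl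

lemma frobNorm_eq {n p : ℕ} (M : Matrix (Fin n) (Fin p) ℝ) : frobNorm M = ‖toE n p M‖ := by
  rw [EuclideanSpace.norm_eq]
  simp [frobNorm, Fintype.sum_prod_type, Real.norm_eq_abs, sq_abs, toE]

lemma frobNorm_sum_le {n p : ℕ} (s : Finset ℕ) (f : ℕ → Matrix (Fin n) (Fin p) ℝ) :
    frobNorm (∑ m ∈ s, f m) ≤ ∑ m ∈ s, frobNorm (f m) := by
  simp only [frobNorm_eq, map_sum]
  exact norm_sum_le _ _

lemma frobNorm_smul {n p : ℕ} (c : ℝ) (M : Matrix (Fin n) (Fin p) ℝ) :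
    frobNorm (c • M) = |c| * frobNorm M := by
  simp only [frobNorm_eq, map_smul, norm_smul, Real.norm_eq_abs]

/-- Consensus deviation bound (Lemma 3 / Lemma 5 of the paper): for the distributed
iteration `X(m+1) = W·X(m) - α(m)·V(m)` with `X(0) = 0`, bounded "gradients"
`‖V(m)‖ ≤ G`, and mixing matrix satisfying `‖(W^j - (1/n)J)·M‖ ≤ λ^j ‖M‖`, the deviation
of `X(k)` from its row average is bounded via Cauchy–Schwarz by
`G·(∑ α(m)²)^{1/2}·(∑ λ^{2(k-1-m)})^{1/2}`. -/
theorem consensus_deviation_bound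
    (n p : ℕ) (hn : 1 ≤ n)
    (W : Matrix (Fin n) (Fin n) ℝ) (lam G : ℝ) (hlam : 0 ≤ lam) (hG : 0 ≤ G)
    (J : Matrix (Fin n) (Fin n) ℝ) (hJ : J = Matrix.of fun _ _ => (1 : ℝ))
    (hW : ∀ (j : ℕ) (M : Matrix (Fin n) (Fin p) ℝ),
      frobNorm ((W ^ j - (1 / (n : ℝ)) • J) * M) ≤ lam ^ j * frobNorm M)
    (α : ℕ → ℝ) (hα : ∀ m, 0 ≤ α m)
    (V : ℕ → Matrix (Fin n) (Fin p) ℝ) (hV : ∀ m, frobNorm (V m) ≤ G)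
    (X : ℕ → Matrix (Fin n) (Fin p) ℝ)
    (hX0 : X 0 = 0)
    (hXrec : ∀ m, X (m + 1) = W * X m - α m • V m)
    (k : ℕ) :
    frobNorm (X k - (1 / (n : ℝ)) • (J * X k)) ≤
      G * Real.sqrt (∑ m ∈ range k, (α m) ^ 2) *
        Real.sqrt (∑ m ∈ range k, lam ^ (2 * (k - 1 - m))) := by
  set c : ℝ := 1 / (n : ℝ) with hc
  have hn0 : (n : ℝ) ≠ 0 := by positivity
  -- J * J = n • J
  have hJJ : J * J = (n : ℝ) • J := by
    subst hJ
    ext i l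
    simp [Matrix.mul_apply]
  -- closed form for X k
  have hXk : ∀ k, X k = ∑ m ∈ range k, (-(α m)) • (W ^ (k - 1 - m) * V m) := by
    intro k
    induction k with
    | zero => simp [hX0]
    | succ k ih =>
      rw [hXrec k, ih, Matrix.mul_sum, Finset.sum_range_succ]
      have h1 : ∀ m ∈ range k, W * ((-(α m)) • (W ^ (k - 1 - m) * V m))
          = (-(α m)) • (W ^ (k + 1 - 1 - m) * V m) := by
        intro m hm
        have hm' : m < k := Finset.mem_range.mp hm
        have he : k + 1 - 1 - m = (k - 1 - m) + 1 := by omega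
        rw [Matrix.mul_smul, he, pow_succ', Matrix.mul_assoc]
      rw [Finset.sum_congr rfl h1, show k + 1 - 1 - k = 0 by omega, pow_zero,
        Matrix.one_mul, sub_eq_add_neg, neg_smul]
  -- key algebraic identity
  have hkey : ∀ j (M : Matrix (Fin n) (Fin p) ℝ),
      (W ^ j * M) - c • (J * (W ^ j * M)) =
        (W ^ 0 - c • J) * ((W ^ j - c • J) * M) := by
    intro j M
    rw [pow_zero]
    have expand : (1 - c • J) * ((W ^ j - c • J) * M)
        = (W ^ j - c • (J * W ^ j) - c • J + (c * c) • (J * J)) * M := by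
      rw [← Matrix.mul_assoc]
      congr 1
      simp only [Matrix.sub_mul, Matrix.mul_sub, Matrix.one_mul, Matrix.mul_one,
        Matrix.smul_mul, Matrix.mul_smul, smul_sub, smul_smul, one_mul]
      abel
    rw [expand, hJJ, smul_smul]
    have hcc : c * c * (n : ℝ) = c := by rw [hc, mul_assoc, one_div, inv_mul_cancel₀ hn0, mul_one]
    rw [hcc, sub_add_cancel, Matrix.sub_mul, Matrix.smul_mul, Matrix.mul_assoc]
  -- rewrite the deviation as a sum
  have hdev : X k - c • (J * X k) =
      ∑ m ∈ range k, (-(α m)) • ((W ^ 0 - c • J) * ((W ^ (k - 1 - m) - c • J) * V m)) := by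
    rw [hXk k, Matrix.mul_sum, Finset.smul_sum, ← Finset.sum_sub_distrib]
    apply Finset.sum_congr rfl
    intro m _
    rw [Matrix.mul_smul, smul_comm c, ← smul_sub, hkey]
  -- term-wise bound
  have hterm : ∀ m ∈ range k,
      frobNorm ((-(α m)) • ((W ^ 0 - c • J) * ((W ^ (k - 1 - m) - c • J) * V m))) ≤
        α m * (lam ^ (k - 1 - m) * G) := by
    intro m _
    rw [frobNorm_smul, abs_neg, abs_of_nonneg (hα m)]
    apply mul_le_mul_of_nonneg_left _ (hα m)
    calc frobNorm ((W ^ 0 - c • J) * ((W ^ (k - 1 - m) - c • J) * V m))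
        ≤ lam ^ 0 * frobNorm ((W ^ (k - 1 - m) - c • J) * V m) := hW 0 _
      _ = frobNorm ((W ^ (k - 1 - m) - c • J) * V m) := by rw [pow_zero, one_mul]
      _ ≤ lam ^ (k - 1 - m) * frobNorm (V m) := hW _ _
      _ ≤ lam ^ (k - 1 - m) * G := by
          exact mul_le_mul_of_nonneg_left (hV m) (pow_nonneg hlam _)
  have hbound : frobNorm (X k - c • (J * X k)) ≤ G * ∑ m ∈ range k, α m * lam ^ (k - 1 - m) := by
    rw [hdev]
    calc frobNorm _ ≤ ∑ m ∈ range k,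
          frobNorm ((-(α m)) • ((W ^ 0 - c • J) * ((W ^ (k - 1 - m) - c • J) * V m))) :=
        frobNorm_sum_le _ _
      _ ≤ ∑ m ∈ range k, α m * (lam ^ (k - 1 - m) * G) := Finset.sum_le_sum hterm
      _ = G * ∑ m ∈ range k, α m * lam ^ (k - 1 - m) := by
          rw [Finset.mul_sum]; apply Finset.sum_congr rfl; intro m _; ring
  -- Cauchy–Schwarz
  have hCS : ∑ m ∈ range k, α m * lam ^ (k - 1 - m) ≤
      Real.sqrt (∑ m ∈ range k, (α m) ^ 2) *
        Real.sqrt (∑ m ∈ range k, lam ^ (2 * (k - 1 - m))) := by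
    have h1 : (∑ m ∈ range k, α m * lam ^ (k - 1 - m)) ^ 2 ≤
        (∑ m ∈ range k, (α m) ^ 2) * (∑ m ∈ range k, (lam ^ (k - 1 - m)) ^ 2) :=
      Finset.sum_mul_sq_le_sq_mul_sq _ _ _
    have h2 : ∀ m, (lam ^ (k - 1 - m)) ^ 2 = lam ^ (2 * (k - 1 - m)) := by
      intro m; rw [← pow_mul, mul_comm]
    have hs : 0 ≤ ∑ m ∈ range k, α m * lam ^ (k - 1 - m) :=
      Finset.sum_nonneg fun m _ => mul_nonneg (hα m) (pow_nonneg hlam _)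
    rw [← Real.sqrt_mul (Finset.sum_nonneg fun m _ => sq_nonneg _)]
    rw [show (∑ m ∈ range k, lam ^ (2 * (k - 1 - m))) =
      ∑ m ∈ range k, (lam ^ (k - 1 - m)) ^ 2 from Finset.sum_congr rfl fun m _ => (h2 m).symm]
    exact (Real.le_sqrt hs (by positivity)).mpr h1
  calc frobNorm (X k - c • (J * X k)) ≤ G * ∑ m ∈ range k, α m * lam ^ (k - 1 - m) := hbound
    _ ≤ G * (Real.sqrt (∑ m ∈ range k, (α m) ^ 2) *
        Real.sqrt (∑ m ∈ range k, lam ^ (2 * (k - 1 - m)))) :=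
      mul_le_mul_of_nonneg_left hCS hG
    _ = _ := by ring
end

section
/- Let E be a real inner product space, let f : E → ℝ be differentiable with gradient ∇f, let f be μ-strongly convex on E with μ > 0, let ∇f be μ-Lipschitz (i.e. the Lipschitz constant of the gradient equals the strong convexity parameter, L = μ), and let x* ∈ E satisfy ∇f(x*) = 0. Then for every x ∈ E: ∇f(x) = μ·(x − x*), and consequently x − (2/(μ+μ))·∇f(x) = x − (1/μ)·∇f(x) = x*; i.e. one gradient step with step size 2/(μ+L) reaches the optimizer exactly, so the contraction factor √(1 − 2μ/(μ+L)) equals 0. -/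
open RealInnerProductSpace

private lemma line_deriv {E : Type*} [NormedAddCommGroup E] [InnerProductSpace ℝ E] [CompleteSpace E]
    (f : E → ℝ) (g : E → E) (μ : ℝ) (hgrad : ∀ x, HasGradientAt f (g x) x)
    (x y : E) (t : ℝ) :
    HasDerivAt (fun t : ℝ => f (x + t • (y - x)) - μ / 2 * ‖x + t • (y - x)‖ ^ 2)
      (⟪g (x + t • (y - x)) - μ • (x + t • (y - x)), y - x⟫) t := by
  have hc : HasDerivAt (fun t : ℝ => x + t • (y - x)) (y - x) t := by
    simpa using ((hasDerivAt_id t).smul_const (y - x)).const_add x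
  have h1 : HasDerivAt (fun t : ℝ => f (x + t • (y - x)))
      (⟪g (x + t • (y - x)), y - x⟫) t := by
    have := ((hgrad (x + t • (y - x))).hasFDerivAt).comp_hasDerivAt t hc
    exact this
  have h2 : HasDerivAt (fun t : ℝ => ‖x + t • (y - x)‖ ^ 2)
      (2 * ⟪x + t • (y - x), y - x⟫) t := hc.norm_sq
  have := h1.sub ((h2.const_mul (μ / 2)))
  refine this.congr_deriv ?_
  rw [inner_sub_left, real_inner_smul_left]
  ring

private lemma grad_mono {E : Type*} [NormedAddCommGroup E] [InnerProductSpace ℝ E] [CompleteSpace E]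
    (f : E → ℝ) (g : E → E) (μ : ℝ) (hgrad : ∀ x, HasGradientAt f (g x) x)
    (hsc : ConvexOn ℝ Set.univ (fun x => f x - μ / 2 * ‖x‖ ^ 2))
    (x y : E) : μ * ‖y - x‖ ^ 2 ≤ ⟪g y - g x, y - x⟫ := by
  set φ : ℝ → ℝ := fun t : ℝ => f (x + t • (y - x)) - μ / 2 * ‖x + t • (y - x)‖ ^ 2
  have hφ : ConvexOn ℝ Set.univ φ := by
    have := hsc.comp_affineMap
      (AffineMap.lineMap x y : ℝ →ᵃ[ℝ] E)
    simp only [Set.preimage_univ] at this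
    refine (show _ = φ from ?_) ▸ this
    funext t
    simp only [φ, AffineMap.lineMap_apply, Function.comp, vsub_eq_sub, vadd_eq_add]
    rw [add_comm (t • (y - x)) x]
  have h0 : HasDerivAt φ (⟪g x - μ • x, y - x⟫) 0 := by
    have := line_deriv f g μ hgrad x y 0
    simpa using this
  have h1 : HasDerivAt φ (⟪g y - μ • y, y - x⟫) 1 := by
    have := line_deriv f g μ hgrad x y 1
    simpa using this
  have hle1 : ⟪g x - μ • x, y - x⟫ ≤ slope φ 0 1 :=
    hφ.le_slope_of_hasDerivAt (Set.mem_univ 0) (Set.mem_univ 1) one_pos h0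
  have hle2 : slope φ 0 1 ≤ ⟪g y - μ • y, y - x⟫ :=
    hφ.slope_le_of_hasDerivAt (Set.mem_univ 0) (Set.mem_univ 1) one_pos h1
  have h := hle1.trans hle2
  have : ⟪μ • y - μ • x, y - x⟫ ≤ ⟪g y - g x, y - x⟫ := by
    rw [inner_sub_left, inner_sub_left] at h ⊢
    linarith
  calc μ * ‖y - x‖ ^ 2 = ⟪μ • y - μ • x, y - x⟫ := by
        rw [← smul_sub, real_inner_smul_left, real_inner_self_eq_norm_sq]
    _ ≤ ⟪g y - g x, y - x⟫ := this

/-- Corollary 2 of the paper (superlinear convergence): if the strong convexity parameter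
equals the Lipschitz constant of the gradient (`L = μ`), then `∇f(x) = μ·(x - x*)`, a
single gradient step with step size `2/(μ+μ) = 1/μ` reaches the optimizer exactly, and the
contraction factor `√(1 - 2μ/(μ+μ))` is `0`. -/
theorem superlinear_case_equal_parameters
    {E : Type*} [NormedAddCommGroup E] [InnerProductSpace ℝ E] [CompleteSpace E]
    (f : E → ℝ) (g : E → E) (μ : ℝ) (xstar : E)
    (hμ : 0 < μ)
    (hgrad : ∀ x, HasGradientAt f (g x) x)
    (hsc : ConvexOn ℝ Set.univ (fun x => f x - μ / 2 * ‖x‖ ^ 2))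
    (hlip : ∀ x y, ‖g x - g y‖ ≤ μ * ‖x - y‖)
    (hopt : g xstar = 0) :
    (∀ x : E, g x = μ • (x - xstar)) ∧
    (∀ x : E, x - (2 / (μ + μ)) • g x = xstar) ∧
    (∀ x : E, x - (1 / μ) • g x = xstar) ∧
    Real.sqrt (1 - 2 * μ / (μ + μ)) = 0 := by
  have key : ∀ x : E, g x = μ • (x - xstar) := by
    intro x
    have hmono := grad_mono f g μ hgrad hsc xstar x
    rw [hopt, sub_zero] at hmono
    have hl := hlip x xstar
    rw [hopt, sub_zero] at hl
    have hsq : ‖g x - μ • (x - xstar)‖ ^ 2 ≤ 0 := by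
      have expand : ‖g x - μ • (x - xstar)‖ ^ 2
          = ‖g x‖ ^ 2 - 2 * μ * ⟪g x, x - xstar⟫ + μ ^ 2 * ‖x - xstar‖ ^ 2 := by
        rw [← real_inner_self_eq_norm_sq, inner_sub_sub_self, real_inner_smul_left,
          real_inner_smul_right, real_inner_smul_left, real_inner_smul_right,
          real_inner_self_eq_norm_sq, real_inner_self_eq_norm_sq, real_inner_comm]
        ring
      have hg2 : ‖g x‖ ^ 2 ≤ (μ * ‖x - xstar‖) ^ 2 := by
        apply pow_le_pow_left₀ (norm_nonneg _) hl _
      nlinarith [hmono]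
    have hz : ‖g x - μ • (x - xstar)‖ = 0 := by
      nlinarith [norm_nonneg (g x - μ • (x - xstar)), sq_nonneg ‖g x - μ • (x - xstar)‖]
    rw [norm_eq_zero, sub_eq_zero] at hz
    exact hz
  refine ⟨key, ?_, ?_, ?_⟩
  · intro x
    rw [key x, smul_smul]
    have : 2 / (μ + μ) * μ = 1 := by field_simp; ring
    rw [this, one_smul]; abel
  · intro x
    rw [key x, smul_smul, one_div, inv_mul_cancel₀ hμ.ne', one_smul]; abel
  · have : 2 * μ / (μ + μ) = 1 := by field_simp; ring
    rw [this, sub_self, Real.sqrt_zero]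
end
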